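/- Let Δ be a distribution of Σ and let Q ⊆ M(Δ). Suppose Δ belongs to the smallest set of distributions of Σ that contains Q and is closed under substitution (i.e., that contains (Δ' ⊢_i Δ'') whenever it contains Δ' and Δ'' and Δ' ⇀_i Δ''). Then every P ∈ S_Δ with |P| ≥ 2 and P ≤_Δ Q is a reduction of Δ. -/

import Mathlib

/-- A *distribution* of the (finite) alphabet `α`: a family of non-empty,
pairwise incomparable (under set inclusion) sub-alphabets whose union is `α`.
Its size is `comps.ncard`. -/
structure Distr (α : Type) [Fintype α] where
  comps : Set (Set α)
  comps_nonempty : ∀ S ∈ comps, S.Nonempty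
  comps_cover : ∀ a : α, ∃ S ∈ comps, a ∈ S
  comps_incomp : ∀ S ∈ comps, ∀ T ∈ comps, S ≠ T → ¬ S ⊆ T

section Defs

variable {α : Type} [Fintype α]

/-- Natural projection `P_{Σ'}`: erase from a string all symbols not in `S`. -/
noncomputable def projA (S : Set α) (s : List α) : List α :=
  s.filter fun a => @decide (a ∈ S) (Classical.propDecidable _)

/-- `L` is decomposable with respect to `Δ`:
`L = ∥_i P_{Σ_i}(L) = ⋂_i P_{Σ_i}⁻¹(P_{Σ_i}(L))`. -/
def Decomposable (L : Set (List α)) (Δ : Distr α) : Prop :=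
  L = ⋂ S ∈ Δ.comps, projA S ⁻¹' (projA S '' L)

/-- The partial order `≤_Σ` on distributions: every component of `Δ` is
contained in some component of `Δ'`. -/
def DistLE (Δ Δ' : Distr α) : Prop :=
  ∀ S ∈ Δ.comps, ∃ T ∈ Δ'.comps, S ⊆ T

/-- `P` is a *reduction* of `Δ`. -/
def IsReduction (P : Set (Distr α)) (Δ : Distr α) : Prop :=
  2 ≤ P.ncard ∧
  (∀ Δ' ∈ P, Δ'.comps.ncard < Δ.comps.ncard) ∧
  (∀ L : Set (List α), Decomposable L Δ ↔ ∀ Δ' ∈ P, Decomposable L Δ')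

/-- The maximal members (under set inclusion) of a family of sets. -/
def MaximalMem {β : Type} (F : Set (Set β)) : Set (Set β) :=
  {S | S ∈ F ∧ ∀ T ∈ F, S ⊆ T → S = T}

/-- The dependence relation `D_Δ`. -/
def DepRel (Δ : Distr α) : Set (α × α) :=
  {p | ∃ S ∈ Δ.comps, p.1 ∈ S ∧ p.2 ∈ S}

/-- The independence relation `I_Δ = Σ × Σ − D_Δ`. -/
def IndepRel (Δ : Distr α) : Set (α × α) :=
  {p | ¬ ∃ S ∈ Δ.comps, p.1 ∈ S ∧ p.2 ∈ S}

/-- `Σ' ⊑ Δ`: `Σ'` is contained in some component of `Δ`. -/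
def SqSub (S : Set α) (Δ : Distr α) : Prop :=
  ∃ T ∈ Δ.comps, S ⊆ T

/-- `Δ` is the greatest lower bound of the family `D` with respect to `≤_Σ`. -/
def IsGLBFam {l : ℕ} (D : Fin l → Distr α) (Δ : Distr α) : Prop :=
  (∀ i, DistLE Δ (D i)) ∧
  ∀ Δ''' : Distr α, (∀ i, DistLE Δ''' (D i)) → DistLE Δ''' Δ

/-- `Δ'` is *merged* from `Δ`: `Δ' ≠ (Σ)` and `Δ'` is obtained from a
partition of the components of `Δ` having at least one block of size ≥ 2 by
taking the unions over the blocks and keeping only the maximal resulting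
sub-alphabets. -/
def MergedFrom (Δ' Δ : Distr α) : Prop :=
  Δ'.comps ≠ {Set.univ} ∧
  ∃ part : Set (Set (Set α)),
    (∀ B ∈ part, B.Nonempty) ∧
    (∀ B ∈ part, B ⊆ Δ.comps) ∧
    (∀ B ∈ part, ∀ C ∈ part, B ≠ C → Disjoint B C) ∧
    (∀ S ∈ Δ.comps, ∃ B ∈ part, S ∈ B) ∧
    (∃ B ∈ part, ∃ S ∈ B, ∃ T ∈ B, S ≠ T) ∧
    Δ'.comps = MaximalMem {U : Set α | ∃ B ∈ part, U = ⋃₀ B}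

/-- Membership in the search space `S_Δ`: a set of distributions merged from
`Δ` that are pairwise `≤_Σ`-incomparable. -/
def MemS (Δ : Distr α) (P : Set (Distr α)) : Prop :=
  (∀ Δ' ∈ P, MergedFrom Δ' Δ) ∧
  ∀ Δ₁ ∈ P, ∀ Δ₂ ∈ P, Δ₁ ≠ Δ₂ → ¬ DistLE Δ₁ Δ₂

/-- The ordering `≤_Δ` on sets of distributions: every member of `Q` has a
member of `P` below it with respect to `≤_Σ`. -/
def SetLE (P Q : Set (Distr α)) : Prop :=
  ∀ Δ' ∈ Q, ∃ Δ'' ∈ P, DistLE Δ'' Δ'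

/-- `[F]`: the `≤_Σ`-minimal members of a set of distributions. -/
def MinimalD (F : Set (Distr α)) : Set (Distr α) :=
  {Δ' | Δ' ∈ F ∧ ∀ Δ'' ∈ F, DistLE Δ'' Δ' → DistLE Δ' Δ''}

/-- `Δ'` is obtained from `Δ` by merging exactly two components `S ≠ T`
(and keeping only the maximal sub-alphabets); the members of `⊥(Δ)`. -/
def MinMergedFrom (Δ' Δ : Distr α) : Prop :=
  ∃ S ∈ Δ.comps, ∃ T ∈ Δ.comps, S ≠ T ∧
    Δ'.comps = MaximalMem ((Δ.comps \ {S, T}) ∪ {S ∪ T})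

/-- The set `A(Δ)` of shared symbols of a distribution. -/
def SharedSyms (Δ : Distr α) : Set α :=
  {a | ∃ S ∈ Δ.comps, ∃ T ∈ Δ.comps, S ≠ T ∧ a ∈ S ∧ a ∈ T}

/-- The substitution of `Δ'` into the component `C` of `Δ''` yields `Δs`:
`Δs` is obtained from the components of `Δ''` other than `C` together with the
intersections `C ∩ S` for components `S` of `Δ'`, keeping only the maximal
non-empty members. -/
def SubstResult (Δ' Δ'' : Distr α) (C : Set α) (Δs : Distr α) : Prop :=
  Δs.comps =
    MaximalMem {T : Set α |
      T.Nonempty ∧ (T ∈ Δ''.comps \ {C} ∨ ∃ S ∈ Δ'.comps, T = C ∩ S)}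

/-- One swap of two adjacent symbols forming a pair in `I`. -/
def SwapStep (I : Set (α × α)) (s t : List α) : Prop :=
  ∃ (u v : List α) (a b : α),
    (a, b) ∈ I ∧ s = u ++ a :: b :: v ∧ t = u ++ b :: a :: v

/-- Trace equivalence with respect to `I`: a finite sequence of swaps of
adjacent independent symbols. -/
def TraceEquiv (I : Set (α × α)) : List α → List α → Prop :=
  Relation.ReflTransGen (SwapStep I)

/-- `L` is trace-closed with respect to `I`. -/
def TraceClosed (I : Set (α × α)) (L : Set (List α)) : Prop :=
  L = {t | ∃ s ∈ L, TraceEquiv I s t}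

/-- The map `N` determined by the enumeration `c` of the components of a
distribution: `N(a) = {i : a ∉ Σ_i}`. -/
def Nmap {n : ℕ} (c : Fin n → Set α) (a : α) : Set (Fin n) :=
  {i | a ∉ c i}

/-- A simple path from `x` to `y` in the graph `(Σ, D)`: a list of pairwise
distinct symbols, starting at `x`, ending at `y`, with consecutive symbols
related by `D`. -/
def IsSimplePath (D : Set (α × α)) (p : List α) (x y : α) : Prop :=
  p.Nodup ∧ p.head? = some x ∧ p.getLast? = some y ∧
    p.Chain' (fun a b => (a, b) ∈ D)

/-- `Cr_D(S, y)` (with `N` given by the enumeration `c`): the set of indices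
`i` such that some simple path `p` from some `x ∈ S` to `y` in `(Σ, D)`
satisfies `i ∈ ⋂_{a ∈ p.dropLast} N(a)`. -/
def CrSet {n : ℕ} (c : Fin n → Set α) (D : Set (α × α)) (S : Set α) (y : α) :
    Set (Fin n) :=
  {i | ∃ x ∈ S, ∃ p : List α,
    IsSimplePath D p x y ∧ ∀ a ∈ p.dropLast, i ∈ Nmap c a}

/-- The smallest set of distributions containing `Q` and closed under
substitution. -/
inductive SubstClosure (Q : Set (Distr α)) : Distr α → Prop
  | base (Δ' : Distr α) (h : Δ' ∈ Q) : SubstClosure Q Δ'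
  | step (Δ' Δ'' Δs : Distr α) (C : Set α)
      (h1 : SubstClosure Q Δ') (h2 : SubstClosure Q Δ'')
      (hC : C ∈ Δ''.comps) (hA : SharedSyms Δ' ⊆ C)
      (hs : SubstResult Δ' Δ'' C Δs) : SubstClosure Q Δs

end Defs

section Count

variable {α : Type} [Fintype α] [DecidableEq α]

/-- `L(Σ_j)` (with `j` 0-indexed, so the paper's exponent `j+1` is `j+2`
here): all strings containing exactly one occurrence of each `σ_i ∈ Σ_j` and
exactly `j+2` occurrences of each `σ_i ∉ Σ_j`. -/
def Lword {m : ℕ} (σ : Fin m → α) (Sj : Set α) (j : ℕ) : Set (List α) :=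
  {s | ∀ i : Fin m,
    (σ i ∈ Sj → s.count (σ i) = 1) ∧ (σ i ∉ Sj → s.count (σ i) = j + 2)}

/-- The candidate counter example `L_cand = ⋃_j L(Σ_j)`, relative to an
enumeration `c` of the components and an enumeration `σ` of the alphabet. -/
def Lcand {n m : ℕ} (c : Fin n → Set α) (σ : Fin m → α) : Set (List α) :=
  ⋃ j : Fin n, Lword σ (c j) (j : ℕ)

end Count

/-!
Decomposability with respect to `Δ` passes to every coarser distribution, and a merged
distribution is coarser than `Δ` with strictly fewer components; this gives one direction and
the size bound. Conversely, decomposability with respect to all members of `P` passes through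
`P ≤_Δ Q` to all members of `Q`, so it suffices that substitution preserves decomposability.
Let `Δ' ⇀ Δ''` at the component `C`, and let every projection of `s` onto a component of the
substitution be the projection of a word of `L`. For each `S ∈ Δ'` pick `r_S ∈ L` agreeing
with `s` on `C ∩ S`. Since distinct components of `Δ'` overlap only inside `C`, the words `r_S`
and `s` can be glued into one word `w` with `P_S w = P_S r_S` for all `S` and
`P_C w = P_C s`. Then `w ∈ L` by decomposability for `Δ'`, which supplies the projection onto
`C`, and `s ∈ L` by decomposability for `Δ''`.
-/

section Projection

variable {α : Type}

@[simp]
lemma projA_nil (S : Set α) : projA S [] = [] := rfl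

@[simp]
lemma projA_cons_of_mem {S : Set α} {a : α} (h : a ∈ S) (l : List α) :
    projA S (a :: l) = a :: projA S l := by
  simp [projA, h]

@[simp]
lemma projA_cons_of_not_mem {S : Set α} {a : α} (h : a ∉ S) (l : List α) :
    projA S (a :: l) = projA S l := by
  simp [projA, h]

@[simp]
lemma projA_append (S : Set α) (l l' : List α) :
    projA S (l ++ l') = projA S l ++ projA S l' :=
  List.filter_append ..

lemma projA_eq_nil_iff {S : Set α} {l : List α} : projA S l = [] ↔ ∀ x ∈ l, x ∉ S := by
  simp [projA, List.filter_eq_nil_iff]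

@[simp]
lemma projA_empty (l : List α) : projA ∅ l = [] :=
  projA_eq_nil_iff.2 fun _ _ => Set.notMem_empty _

@[simp]
lemma projA_projA (S T : Set α) (l : List α) :
    projA S (projA T l) = projA (S ∩ T) l := by
  simp only [projA, List.filter_filter]
  exact List.filter_congr fun x _ => Bool.eq_iff_iff.2 (by simp)

lemma projA_eq_projA_of_subset {X U : Set α} {l s : List α} (hXU : X ⊆ U)
    (h : projA U l = projA U s) : projA X l = projA X s := by
  rw [← Set.inter_eq_left.2 hXU, ← projA_projA, h, projA_projA]

theorem exists_projA_eq_projA_of_projA_inter_eq (A B : Set α) (u v : List α)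
    (h : projA (A ∩ B) u = projA (A ∩ B) v) :
    ∃ w, projA A w = projA A u ∧ projA B w = projA B v := by
  induction u generalizing v with
  | nil => exact ⟨projA B v, by simpa using h.symm, by simp⟩
  | cons a u ih =>
    by_cases ha : a ∈ A ∩ B
    · obtain ⟨v₁, v₂, rfl, hv₁, -, hv₂⟩ :=
        List.filter_eq_cons_iff.1 (h.symm.trans (projA_cons_of_mem ha u))
      have hv₁ : projA (A ∩ B) v₁ = [] := projA_eq_nil_iff.2 (by simpa using hv₁)
      obtain ⟨w, hwA, hwB⟩ := ih v₂ hv₂.symm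
      refine ⟨projA B v₁ ++ a :: w, ?_, ?_⟩
      · simp [ha.1, hwA, hv₁]
      · simp [ha.2, hwB]
    · obtain ⟨w, hwA, hwB⟩ := ih v (by simpa [ha] using h)
      by_cases haA : a ∈ A
      · have haB : a ∉ B := fun haB => ha ⟨haA, haB⟩
        exact ⟨a :: w, by simp [haA, hwA], by simp [haB, hwB]⟩
      · exact ⟨w, by simp [haA, hwA], hwB⟩

theorem exists_projA_eq_of_pairwise_inter_subset {C : Set α} {F : Set (Set α)}
    (hF : F.Finite) (hpair : F.Pairwise fun S T => S ∩ T ⊆ C) (t : List α)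
    (r : Set α → List α) (hr : ∀ S ∈ F, projA (C ∩ S) (r S) = projA (C ∩ S) t) :
    ∃ w, projA C w = projA C t ∧ ∀ S ∈ F, projA S w = projA S (r S) := by
  induction F, hF using Set.Finite.induction_on with
  | empty => exact ⟨t, rfl, by simp⟩
  | @insert S₀ F hS₀ _ ih =>
    obtain ⟨w, hwC, hwF⟩ := ih (hpair.mono (Set.subset_insert _ _))
      fun S hS => hr S (Set.mem_insert_of_mem _ hS)
    have hinter : (C ∪ ⋃₀ F) ∩ S₀ = C ∩ S₀ := by
      refine Set.Subset.antisymm ?_ (Set.inter_subset_inter_left _ Set.subset_union_left)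
      rintro x ⟨hx | ⟨S, hS, hxS⟩, hx₀⟩
      · exact ⟨hx, hx₀⟩
      · exact ⟨hpair (Set.mem_insert_of_mem _ hS) (Set.mem_insert _ _)
          (ne_of_mem_of_not_mem hS hS₀) ⟨hxS, hx₀⟩, hx₀⟩
    obtain ⟨w', hw'F, hw'S₀⟩ := exists_projA_eq_projA_of_projA_inter_eq (C ∪ ⋃₀ F) S₀ w (r S₀)
      (by rw [hinter, projA_eq_projA_of_subset Set.inter_subset_left hwC,
        hr S₀ (Set.mem_insert _ _)])
    refine ⟨w', (projA_eq_projA_of_subset Set.subset_union_left hw'F).trans hwC, ?_⟩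
    rintro S (rfl | hS)
    · exact hw'S₀
    · exact (projA_eq_projA_of_subset
        ((Set.subset_sUnion_of_mem hS).trans Set.subset_union_right) hw'F).trans (hwF S hS)

end Projection

theorem mem_maximalMem_iff {β : Type} {F : Set (Set β)} {S : Set β} :
    S ∈ MaximalMem F ↔ Maximal (· ∈ F) S :=
  ⟨fun h => ⟨h.1, fun T hT hST => (h.2 T hT hST).symm.le⟩,
    fun h => ⟨h.1, fun _ hT hST => hST.antisymm (h.2 hT hST)⟩⟩

theorem exists_subset_mem_maximalMem {β : Type} {F : Set (Set β)} (hF : F.Finite)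
    {S : Set β} (hS : S ∈ F) : ∃ T ∈ MaximalMem F, S ⊆ T := by
  obtain ⟨T, hST, hT⟩ := hF.exists_le_maximal hS
  exact ⟨T, mem_maximalMem_iff.2 hT, hST⟩

theorem ncard_lt_of_pairwiseDisjoint_of_nontrivial {β : Type} {X : Set β} (hX : X.Finite)
    {part : Set (Set β)} (hne : ∀ B ∈ part, B.Nonempty) (hsub : ∀ B ∈ part, B ⊆ X)
    (hdisj : part.PairwiseDisjoint id) (hnt : ∃ B ∈ part, B.Nontrivial) :
    part.ncard < X.ncard := by
  obtain ⟨B₀, hB₀, hnt₀⟩ := hnt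
  have : Nonempty β := ⟨hnt₀.nonempty.some⟩
  choose! g hg using hne
  have heq : ∀ {B B'}, B ∈ part → B' ∈ part → g B ∈ B' → B = B' := fun {B _} hB hB' hgB =>
    hdisj.elim hB hB' (Set.not_disjoint_iff.2 ⟨g B, hg _ hB, hgB⟩)
  obtain ⟨z, hzB₀, hz⟩ := hnt₀.exists_ne (g B₀)
  have hinj : Set.InjOn g part := fun B hB B' hB' h => heq hB hB' (h ▸ hg B' hB')
  have hz_notMem : z ∉ g '' part := by
    rintro ⟨B, hB, rfl⟩
    exact hz (by rw [heq hB hB₀ hzB₀])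
  calc part.ncard = (g '' part).ncard := hinj.ncard_image.symm
    _ < X.ncard := Set.ncard_lt_ncard
      ⟨Set.image_subset_iff.2 fun B hB => hsub B hB (hg B hB),
        fun h => hz_notMem (h (hsub B₀ hB₀ hzB₀))⟩ hX

section Distributions

variable {α : Type} [Fintype α]

theorem decomposable_iff {L : Set (List α)} {Δ : Distr α} :
    Decomposable L Δ ↔
      ∀ s, (∀ S ∈ Δ.comps, ∃ l ∈ L, projA S l = projA S s) → s ∈ L := by
  rw [Decomposable, Set.Subset.antisymm_iff,
    and_iff_right (Set.subset_iInter₂ fun S _ => Set.subset_preimage_image (projA S) L)]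
  simp only [Set.subset_def, Set.mem_iInter₂, Set.mem_preimage, Set.mem_image]

theorem Decomposable.mono {L : Set (List α)} {Δ Δ' : Distr α} (h : Decomposable L Δ)
    (hle : DistLE Δ Δ') : Decomposable L Δ' := by
  rw [decomposable_iff] at h ⊢
  refine fun s hs => h s fun S hS => ?_
  obtain ⟨T, hT, hST⟩ := hle S hS
  obtain ⟨l, hl, he⟩ := hs T hT
  exact ⟨l, hl, projA_eq_projA_of_subset hST he⟩

theorem MergedFrom.distLE {Δ' Δ : Distr α} (h : MergedFrom Δ' Δ) : DistLE Δ Δ' := by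
  obtain ⟨-, part, -, -, -, hcover, -, hcomps⟩ := h
  intro S hS
  obtain ⟨B, hB, hSB⟩ := hcover S hS
  obtain ⟨T, hT, hBT⟩ := exists_subset_mem_maximalMem
    (Set.toFinite {U : Set α | ∃ B ∈ part, U = ⋃₀ B}) ⟨B, hB, rfl⟩
  exact ⟨T, hcomps ▸ hT, (Set.subset_sUnion_of_mem hSB).trans hBT⟩

theorem MergedFrom.ncard_lt {Δ' Δ : Distr α} (h : MergedFrom Δ' Δ) :
    Δ'.comps.ncard < Δ.comps.ncard := by
  obtain ⟨-, part, hne, hsub, hdisj, -, hnt, hcomps⟩ := h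
  calc Δ'.comps.ncard ≤ (Set.sUnion '' part).ncard :=
        Set.ncard_le_ncard (hcomps ▸ fun _ hU => hU.1.imp fun _ hB => ⟨hB.1, hB.2.symm⟩)
    _ ≤ part.ncard := Set.ncard_image_le (Set.toFinite _)
    _ < Δ.comps.ncard :=
        ncard_lt_of_pairwiseDisjoint_of_nontrivial (Set.toFinite _) hne hsub hdisj hnt

theorem SubstResult.mem_comps_of_ne {Δ' Δ'' Δs : Distr α} {C T : Set α}
    (hs : SubstResult Δ' Δ'' C Δs) (hC : C ∈ Δ''.comps) (hT : T ∈ Δ''.comps) (hTC : T ≠ C) :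
    T ∈ Δs.comps := by
  refine hs ▸ ⟨⟨Δ''.comps_nonempty T hT, Or.inl ⟨hT, hTC⟩⟩, ?_⟩
  rintro U ⟨-, ⟨hU, -⟩ | ⟨S, -, rfl⟩⟩ hTU
  · by_contra hne
    exact Δ''.comps_incomp T hT U hU hne hTU
  · exact absurd (hTU.trans Set.inter_subset_left) (Δ''.comps_incomp T hT C hC hTC)

theorem SubstResult.exists_comps_superset_inter {Δ' Δ'' Δs : Distr α} {C S : Set α}
    (hs : SubstResult Δ' Δ'' C Δs) (hC : C ∈ Δ''.comps) (hS : S ∈ Δ'.comps) :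
    ∃ U ∈ Δs.comps, C ∩ S ⊆ U := by
  by_cases hne : (C ∩ S).Nonempty
  · exact hs ▸ exists_subset_mem_maximalMem (Set.toFinite _) ⟨hne, Or.inr ⟨S, hS, rfl⟩⟩
  · obtain ⟨a, -⟩ := Δ''.comps_nonempty C hC
    obtain ⟨U, hU, -⟩ := Δs.comps_cover a
    exact ⟨U, hU, by simp [Set.not_nonempty_iff_eq_empty.1 hne]⟩

theorem Decomposable.of_substResult {L : Set (List α)} {Δ' Δ'' Δs : Distr α} {C : Set α}
    (h' : Decomposable L Δ') (h'' : Decomposable L Δ'') (hC : C ∈ Δ''.comps)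
    (hA : SharedSyms Δ' ⊆ C) (hs : SubstResult Δ' Δ'' C Δs) : Decomposable L Δs := by
  rw [decomposable_iff] at h' h'' ⊢
  intro s hproj
  refine h'' s fun T hT => ?_
  obtain rfl | hTC := eq_or_ne T C
  · have hinter : ∀ S ∈ Δ'.comps, ∃ l ∈ L, projA (T ∩ S) l = projA (T ∩ S) s := fun S hS => by
      obtain ⟨U, hU, hSU⟩ := hs.exists_comps_superset_inter hC hS
      obtain ⟨l, hl, he⟩ := hproj U hU
      exact ⟨l, hl, projA_eq_projA_of_subset hSU he⟩
    choose! r hrL hr using hinter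
    have hpair : Δ'.comps.Pairwise fun S S' => S ∩ S' ⊆ T :=
      fun S hS S' hS' hne _ hx => hA ⟨S, hS, S', hS', hne, hx⟩
    obtain ⟨w, hwT, hwS⟩ :=
      exists_projA_eq_of_pairwise_inter_subset (Set.toFinite _) hpair s r hr
    exact ⟨w, h' w fun S hS => ⟨r S, hrL S hS, (hwS S hS).symm⟩, hwT⟩
  · exact hproj T (hs.mem_comps_of_ne hC hT hTC)

theorem SubstClosure.decomposable {Q : Set (Distr α)} {L : Set (List α)} {Δ : Distr α}
    (hQ : ∀ q ∈ Q, Decomposable L q) (h : SubstClosure Q Δ) : Decomposable L Δ := by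
  induction h with
  | base q hq => exact hQ q hq
  | step _ _ _ _ _ _ hC hA hs ih' ih'' => exact ih'.of_substResult ih'' hC hA hs

end Distributions

theorem statement_11_general {α : Type} [Fintype α] (Δ : Distr α) (Q : Set (Distr α))
    (hcl : SubstClosure Q Δ)
    (P : Set (Distr α)) (hP : MemS Δ P) (hcard : 2 ≤ P.ncard)
    (hPQ : SetLE P Q) :
    IsReduction P Δ := by
  refine ⟨hcard, fun Δ' hΔ' => (hP.1 Δ' hΔ').ncard_lt, fun L => ⟨?_, ?_⟩⟩
  · exact fun hL Δ' hΔ' => hL.mono (hP.1 Δ' hΔ').distLE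
  · refine fun hL => hcl.decomposable fun q hq => ?_
    obtain ⟨Δ', hΔ', hle⟩ := hPQ q hq
    exact (hL Δ' hΔ').mono hle

/-- If `Δ` belongs to the substitution closure of some
`Q ⊆ M(Δ)`, then every `P ∈ S_Δ` with `|P| ≥ 2` and `P ≤_Δ Q` is a reduction
of `Δ`. -/
theorem statement_11 {α : Type} [Fintype α] (Δ : Distr α) (Q : Set (Distr α))
    (hQ : ∀ q ∈ Q, MergedFrom q Δ)
    (hcl : SubstClosure Q Δ)
    (P : Set (Distr α)) (hP : MemS Δ P) (hcard : 2 ≤ P.ncard)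
    (hPQ : SetLE P Q) :
    IsReduction P Δ :=
  statement_11_general Δ Q hcl P hP hcard hPQ
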